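/- arXiv:1406.6910 — 2 statements merged into one kernel-verified Lean document; each statement's English description precedes it below -/
import Mathlib

section
/- For every integer d ≥ 1 and every s ∈ [0, √2], if f(s) ∈ M_d then s ∈ M_d. -/
noncomputable section

/-- `β = √2 - 1`. -/
def β : ℝ := Real.sqrt 2 - 1

/-- `ω = √2 + 1`. -/
def ω : ℝ := Real.sqrt 2 + 1

/-- The break points `Δ_i`. -/
def Δ (i : ℤ) : ℝ :=
  if i < 0 then β ^ i.natAbs
  else if i = 0 then β
  else Real.sqrt 2 - β ^ i.natAbs

/-- The intervals `I_i`. -/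
def Iint (i : ℤ) : Set ℝ :=
  if i < 0 then Set.Ioc (Δ (i - 1)) (Δ i)
  else if i = 0 then Set.Ioo β 1
  else Set.Ico (Δ i) (Δ (i + 1))

/-- The defining formula of `f` on the interval `I_i`. -/
def fval (i : ℤ) (s : ℝ) : ℝ :=
  if i < 0 then ω ^ (i.natAbs + 1) * (Δ i - s)
  else if i = 0 then ω * (s - β)
  else ω ^ (i.natAbs + 1) * (s - Δ i)

/-- `f` is the renormalization map: `f 0 = f √2 = 0` and on each interval `I_i`
    it is given by the corresponding affine formula. These conditions determine
    `f` uniquely on `[0, √2]`. -/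
def IsLuroth (f : ℝ → ℝ) : Prop :=
  f 0 = 0 ∧ f (Real.sqrt 2) = 0 ∧ ∀ i : ℤ, ∀ s ∈ Iint i, f s = fval i s

/-- `ℚ(√2)` as a subset of `ℝ`. -/
def QSqrt2 : Set ℝ := {x | ∃ a b : ℚ, x = (a : ℝ) + (b : ℝ) * Real.sqrt 2}

/-- `ℤ[√2]` as a subset of `ℝ`. -/
def ZSqrt2 : Set ℝ := {x | ∃ m n : ℤ, x = (m : ℝ) + (n : ℝ) * Real.sqrt 2}

/-- `M_d = {s ∈ [0,√2] : d·s ∈ ℤ[√2]}`. -/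
def Mset (d : ℤ) : Set ℝ :=
  {s | s ∈ Set.Icc 0 (Real.sqrt 2) ∧ (d : ℝ) * s ∈ ZSqrt2}

/-! On each interval `I_i`, `f` is `s ↦ ±ω^(|i|+1) (s - Δ_i)` with `Δ_i ∈ ℤ[√2]`, and `ω` is a unit of
`ℤ[√2]` with inverse `β`. Hence `d s = d Δ_i ± β^(|i|+1) · d f(s)`, which lies in `ℤ[√2]` as soon
as `d f(s)` does. The endpoints `0` and `√2` are trivial, and the intervals `I_i` cover `(0, √2)`. -/

lemma sqrt_two_mul_self : √2 * √2 = ((2 : ℤ) : ℝ) := by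
  rw [Real.mul_self_sqrt zero_le_two]; norm_num

def zSqrt2Subring : Subring ℝ := (Zsqrtd.lift ⟨√2, sqrt_two_mul_self⟩).range

lemma mem_zSqrt2Subring {x : ℝ} : x ∈ zSqrt2Subring ↔ x ∈ ZSqrt2 := by
  constructor
  · rintro ⟨z, rfl⟩
    exact ⟨z.re, z.im, by simp⟩
  · rintro ⟨m, n, rfl⟩
    exact ⟨⟨m, n⟩, by simp⟩

lemma sqrt_two_mem_zSqrt2Subring : √2 ∈ zSqrt2Subring :=
  mem_zSqrt2Subring.2 ⟨0, 1, by simp⟩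

lemma beta_mem_zSqrt2Subring : β ∈ zSqrt2Subring :=
  mem_zSqrt2Subring.2 ⟨-1, 1, by simp [β]; ring⟩

lemma beta_pos : 0 < β := sub_pos.2 Real.one_lt_sqrt_two

lemma beta_lt_one : β < 1 := by
  have : √2 < 2 := by nlinarith [Real.mul_self_sqrt (zero_le_two (α := ℝ)), Real.sqrt_nonneg 2]
  unfold β; linarith

lemma beta_mul_omega : β * ω = 1 := by
  unfold β ω; nlinarith [Real.mul_self_sqrt (zero_le_two (α := ℝ))]

lemma Δ_mem_zSqrt2Subring (i : ℤ) : Δ i ∈ zSqrt2Subring := by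
  unfold Δ
  split_ifs
  · exact pow_mem beta_mem_zSqrt2Subring _
  · exact beta_mem_zSqrt2Subring
  · exact sub_mem sqrt_two_mem_zSqrt2Subring (pow_mem beta_mem_zSqrt2Subring _)

lemma exists_eq_Δ_add_mul_fval (i : ℤ) (s : ℝ) :
    ∃ c ∈ zSqrt2Subring, s = Δ i + c * fval i s := by
  have hβω (n : ℕ) : β ^ n * ω ^ n = 1 := by rw [← mul_pow, beta_mul_omega, one_pow]
  have hc := pow_mem beta_mem_zSqrt2Subring (i.natAbs + 1)
  unfold fval
  split_ifs with hneg hzero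
  · refine ⟨-β ^ (i.natAbs + 1), neg_mem hc, ?_⟩
    linear_combination (Δ i - s) * hβω (i.natAbs + 1)
  · subst hzero
    refine ⟨β, beta_mem_zSqrt2Subring, ?_⟩
    simp only [Δ, lt_irrefl, if_false, if_true]
    linear_combination (β - s) * beta_mul_omega
  · refine ⟨β ^ (i.natAbs + 1), hc, ?_⟩
    linear_combination (Δ i - s) * hβω (i.natAbs + 1)

lemma exists_beta_pow_lt_le_beta_pow {t : ℝ} (ht : 0 < t) (htβ : t ≤ β) :
    ∃ k : ℕ, β ^ (k + 2) < t ∧ t ≤ β ^ (k + 1) := by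
  obtain ⟨_ | k, hlt, hle⟩ :=
    exists_nat_pow_near_of_lt_one ht (htβ.trans beta_lt_one.le) beta_pos beta_lt_one
  · simp only [zero_add, pow_one] at hlt
    linarith
  · exact ⟨k, hlt, hle⟩

lemma Iint_neg_succ (k : ℕ) : Iint (-(k + 1 : ℕ)) = Set.Ioc (β ^ (k + 2)) (β ^ (k + 1)) := by
  have hleft : Δ (-(k + 1 : ℕ) - 1) = β ^ (k + 2) := by
    rw [Δ, if_pos (by omega)]; congr 1
  have hright : Δ (-(k + 1 : ℕ)) = β ^ (k + 1) := by
    rw [Δ, if_pos (by omega)]; congr 1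
  rw [Iint, if_pos (by omega), hleft, hright]

lemma Iint_zero : Iint 0 = Set.Ioo β 1 := rfl

lemma Iint_succ (k : ℕ) : Iint (k + 1 : ℕ) = Set.Ico (√2 - β ^ (k + 1)) (√2 - β ^ (k + 2)) := by
  have hleft : Δ (k + 1 : ℕ) = √2 - β ^ (k + 1) := by
    rw [Δ, if_neg (by omega), if_neg (by omega)]; congr 2
  have hright : Δ ((k + 1 : ℕ) + 1) = √2 - β ^ (k + 2) := by
    rw [Δ, if_neg (by omega), if_neg (by omega)]; congr 2
  rw [Iint, if_neg (by omega), if_neg (by omega), hleft, hright]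

lemma exists_mem_Iint {s : ℝ} (hs : s ∈ Set.Ioo 0 √2) : ∃ i, s ∈ Iint i := by
  rcases le_or_gt s β with hsβ | hβs
  · obtain ⟨k, hlt, hle⟩ := exists_beta_pow_lt_le_beta_pow hs.1 hsβ
    exact ⟨-(k + 1 : ℕ), by rw [Iint_neg_succ]; exact ⟨hlt, hle⟩⟩
  rcases lt_or_ge s 1 with hs1 | h1s
  · exact ⟨0, Iint_zero ▸ ⟨hβs, hs1⟩⟩
  · have hpos : 0 < √2 - s := sub_pos.2 hs.2
    have hleβ : √2 - s ≤ β := by unfold β; linarith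
    obtain ⟨k, hlt, hle⟩ := exists_beta_pow_lt_le_beta_pow hpos hleβ
    exact ⟨(k + 1 : ℕ), by rw [Iint_succ]; constructor <;> linarith⟩

/-- for every integer `d ≥ 1` and `s ∈ [0,√2]`,
if `f s ∈ M_d` then `s ∈ M_d`. -/
theorem luroth_Mset_backward_invariant (f : ℝ → ℝ) (hf : IsLuroth f) :
    ∀ d : ℤ, 1 ≤ d → ∀ s ∈ Set.Icc (0 : ℝ) (Real.sqrt 2),
      f s ∈ Mset d → s ∈ Mset d := by
  rintro d - s hs ⟨-, hfs⟩
  refine ⟨hs, mem_zSqrt2Subring.1 ?_⟩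
  rw [← mem_zSqrt2Subring] at hfs
  have hd := intCast_mem zSqrt2Subring d
  rcases hs.1.eq_or_lt with rfl | h0
  · rw [mul_zero]
    exact zero_mem _
  rcases hs.2.eq_or_lt with rfl | h2
  · exact mul_mem hd sqrt_two_mem_zSqrt2Subring
  obtain ⟨i, hi⟩ := exists_mem_Iint ⟨h0, h2⟩
  obtain ⟨c, hc, hs_eq⟩ := exists_eq_Δ_add_mul_fval i s
  rw [← hf.2.2 i s hi] at hs_eq
  rw [hs_eq, mul_add, mul_left_comm]
  exact add_mem (mul_mem hd (Δ_mem_zSqrt2Subring i)) (mul_mem hc hfs)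
end
end

section
/- The point √2/2 satisfies f(√2/2) = √2/2, and it is the unique s ∈ [0, √2] such that f^(k)(s) ∈ I_0 = (β, 1) for every k ≥ 0. -/
/-!
On `I_0 = (β, 1)` the map `f` is `x ↦ √2/2 + ω (x - √2/2)`, an expansion by `ω > 1` about
its fixed point `√2/2`. An orbit that stays in the bounded interval `I_0` therefore has
`ωᵏ |s - √2/2|` bounded for all `k`, which forces `s = √2/2`.
-/

noncomputable section

section Expansion

variable {𝕜 : Type*} [NormedField 𝕜] {f : 𝕜 → 𝕜} {S : Set 𝕜} {p c : 𝕜}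

theorem iterate_sub_eq_pow_mul (hf : ∀ x ∈ S, f x - p = c * (x - p)) {s : 𝕜}
    (hs : ∀ k, f^[k] s ∈ S) (k : ℕ) : f^[k] s - p = c ^ k * (s - p) := by
  induction k with
  | zero => simp
  | succ k ih =>
    rw [Function.iterate_succ_apply', hf _ (hs k), ih, pow_succ']
    ring

theorem eq_of_forall_iterate_mem_of_expanding (hc : 1 < ‖c‖) (hS : Bornology.IsBounded S)
    (hf : ∀ x ∈ S, f x - p = c * (x - p)) {s : 𝕜} (hs : ∀ k, f^[k] s ∈ S) : s = p := by
  by_contra hne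
  have hd : 0 < ‖s - p‖ := norm_pos_iff.mpr (sub_ne_zero.mpr hne)
  obtain ⟨R, hR⟩ := hS.subset_closedBall p
  have hbound (k : ℕ) : ‖c‖ ^ k * ‖s - p‖ ≤ R := by
    have := hR (hs k)
    rwa [Metric.mem_closedBall, dist_eq_norm, iterate_sub_eq_pow_mul hf hs, norm_mul,
      norm_pow] at this
  obtain ⟨k, hk⟩ := pow_unbounded_of_one_lt (R / ‖s - p‖) hc
  exact (hbound k).not_gt ((div_lt_iff₀ hd).mp hk)

end Expansion

theorem one_lt_ω : 1 < ω := by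
  unfold ω
  linarith [Real.sqrt_pos.mpr (zero_lt_two' ℝ)]

theorem sqrt_two_div_two_mem_Iint_zero : Real.sqrt 2 / 2 ∈ Iint 0 := by
  have h2 := Real.sq_sqrt (zero_le_two (α := ℝ))
  have h1 : 1 < Real.sqrt 2 := by nlinarith [Real.sqrt_nonneg 2]
  simp only [Iint, lt_irrefl, if_false, if_true, Set.mem_Ioo, β]
  constructor <;> nlinarith

theorem fval_zero_sub_sqrt_two_div_two (x : ℝ) :
    fval 0 x - Real.sqrt 2 / 2 = ω * (x - Real.sqrt 2 / 2) := by
  have h2 := Real.sq_sqrt (zero_le_two (α := ℝ))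
  simp only [fval, lt_irrefl, if_false, if_true, ω, β]
  linear_combination (-1 / 2 : ℝ) * h2

/-- `√2/2` is a fixed point of `f`, and it is the unique point
of `[0,√2]` all of whose iterates lie in `I_0 = (β,1)`. -/
theorem luroth_fixed_point_sqrt2_div_two (f : ℝ → ℝ) (hf : IsLuroth f) :
    f (Real.sqrt 2 / 2) = Real.sqrt 2 / 2 ∧
    (∀ k : ℕ, f^[k] (Real.sqrt 2 / 2) ∈ Iint 0) ∧
    (∀ s ∈ Set.Icc (0 : ℝ) (Real.sqrt 2),
      (∀ k : ℕ, f^[k] s ∈ Iint 0) → s = Real.sqrt 2 / 2) := by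
  obtain ⟨-, -, hI⟩ := hf
  have hexpand (x : ℝ) (hx : x ∈ Iint 0) :
      f x - Real.sqrt 2 / 2 = ω * (x - Real.sqrt 2 / 2) := by
    rw [hI 0 x hx, fval_zero_sub_sqrt_two_div_two]
  have hfix : f (Real.sqrt 2 / 2) = Real.sqrt 2 / 2 := by
    simpa [sub_eq_zero] using hexpand _ sqrt_two_div_two_mem_Iint_zero
  have hbounded : Bornology.IsBounded (Iint 0) := by
    simpa [Iint] using Metric.isBounded_Ioo β 1
  refine ⟨hfix, fun k => ?_, fun s _ hs => ?_⟩
  · rw [Function.iterate_fixed hfix]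
    exact sqrt_two_div_two_mem_Iint_zero
  · refine eq_of_forall_iterate_mem_of_expanding ?_ hbounded hexpand hs
    rw [Real.norm_eq_abs, abs_of_pos (zero_lt_one.trans one_lt_ω)]
    exact one_lt_ω
end
end
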